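/- Let k be a positive integer. If G is a finite simple graph of order n and size m with minimum degree δ(G) ≥ k, then the k-tuple total restrained domination number satisfies γ_{×k,t}^r(G) ≥ 3n/2 − m/k. -/

import Mathlib

/-!
Double counting the degree sum `2m` against a `(k,k',k'')`-dominating set `S`: the vertices of
`S` contribute at least `k|S|` through their neighbours in `S`; the edges between `S` and its
complement are counted from both ends, contributing at least `2k'(n - |S|)`; and the vertices
outside `S` contribute at least `k''(n - |S|)` through their neighbours outside `S`. For
`k = k' = k''` this gives `2m ≥ 3kn - 2k|S|`.
-/

open Finset

/-- A set `S` of vertices is a `(k,k',k'')`-dominating set if every vertex in `S` has at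
least `k` neighbors in `S`, and every vertex not in `S` has at least `k'` neighbors in `S`
and at least `k''` neighbors outside `S`. -/
def SimpleGraph.IsKkkDomSet {V : Type*} [Fintype V] [DecidableEq V] (G : SimpleGraph V)
    [DecidableRel G.Adj] (k k' k'' : ℕ) (S : Finset V) : Prop :=
  (∀ v ∈ S, k ≤ (G.neighborFinset v ∩ S).card) ∧
  (∀ v ∉ S, k' ≤ (G.neighborFinset v ∩ S).card ∧ k'' ≤ (G.neighborFinset v \ S).card)

/-- The `(k,k',k'')`-domination number: the minimum cardinality of a
`(k,k',k'')`-dominating set. -/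
noncomputable def SimpleGraph.kkkDomNum {V : Type*} [Fintype V] [DecidableEq V]
    (G : SimpleGraph V) [DecidableRel G.Adj] (k k' k'' : ℕ) : ℕ :=
  sInf {n | ∃ S : Finset V, G.IsKkkDomSet k k' k'' S ∧ S.card = n}

namespace SimpleGraph

variable {V : Type*} [Fintype V] [DecidableEq V] (G : SimpleGraph V) [DecidableRel G.Adj]

theorem sum_card_neighborFinset_inter_comm (A B : Finset V) :
    ∑ v ∈ A, #(G.neighborFinset v ∩ B) = ∑ v ∈ B, #(G.neighborFinset v ∩ A) := by
  convert sum_card_bipartiteAbove_eq_sum_card_bipartiteBelow (s := A) (t := B) (r := G.Adj)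
    using 3 <;> ext <;> simp [bipartiteAbove, bipartiteBelow, G.adj_comm, and_comm]

theorem sum_degree_eq_sum_card_inter_add_sum_card_sdiff (A S : Finset V) :
    ∑ v ∈ A, G.degree v
      = ∑ v ∈ A, #(G.neighborFinset v ∩ S) + ∑ v ∈ A, #(G.neighborFinset v \ S) := by
  rw [← sum_add_distrib]
  exact sum_congr rfl fun v _ => (card_inter_add_card_sdiff _ _).symm

theorem sum_card_neighborFinset_sdiff_eq (S : Finset V) :
    ∑ v ∈ S, #(G.neighborFinset v \ S) = ∑ v ∈ Sᶜ, #(G.neighborFinset v ∩ S) := by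
  simp_rw [sdiff_eq_inter_compl]
  exact G.sum_card_neighborFinset_inter_comm S Sᶜ

variable {G}

theorem IsKkkDomSet.mul_card_add_mul_card_compl_le {k k' k'' : ℕ} {S : Finset V}
    (hS : G.IsKkkDomSet k k' k'' S) :
    k * #S + (2 * k' + k'') * #Sᶜ ≤ 2 * #G.edgeFinset := by
  have hin : #S * k ≤ ∑ v ∈ S, #(G.neighborFinset v ∩ S) := card_nsmul_le_sum _ _ _ hS.1
  have hcross : #Sᶜ * k' ≤ ∑ v ∈ Sᶜ, #(G.neighborFinset v ∩ S) :=
    card_nsmul_le_sum _ _ _ fun v hv => (hS.2 v (mem_compl.mp hv)).1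
  have hout : #Sᶜ * k'' ≤ ∑ v ∈ Sᶜ, #(G.neighborFinset v \ S) :=
    card_nsmul_le_sum _ _ _ fun v hv => (hS.2 v (mem_compl.mp hv)).2
  rw [← sum_degrees_eq_twice_card_edges, ← sum_add_sum_compl S,
    G.sum_degree_eq_sum_card_inter_add_sum_card_sdiff S S,
    G.sum_degree_eq_sum_card_inter_add_sum_card_sdiff Sᶜ S, G.sum_card_neighborFinset_sdiff_eq S]
  linarith

theorem isKkkDomSet_univ {k : ℕ} (hδ : ∀ v, k ≤ G.degree v) (k' k'' : ℕ) :
    G.IsKkkDomSet k k' k'' univ :=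
  ⟨fun v _ => by simpa using hδ v, fun v hv => absurd (mem_univ v) hv⟩

theorem exists_isKkkDomSet_card_eq_kkkDomNum {k k' k'' : ℕ} {T : Finset V}
    (hT : G.IsKkkDomSet k k' k'' T) :
    ∃ S, G.IsKkkDomSet k k' k'' S ∧ #S = G.kkkDomNum k k' k'' :=
  Nat.sInf_mem (s := {n | ∃ S : Finset V, G.IsKkkDomSet k k' k'' S ∧ #S = n}) ⟨#T, T, hT, rfl⟩

end SimpleGraph

open SimpleGraph in
/-- If k ≥ 1 and δ(G) ≥ k, then γ_{×k,t}^r(G) = γ_{(k,k,k)}(G) ≥ 3n/2 − m/k. -/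
theorem stmt_17 {V : Type*} [Fintype V] [DecidableEq V] (G : SimpleGraph V)
    [DecidableRel G.Adj] (k : ℕ) (hk : 1 ≤ k)
    (hδ : ∀ v : V, k ≤ G.degree v) :
    3 * (Fintype.card V : ℝ) / 2 - (G.edgeFinset.card : ℝ) / k ≤ G.kkkDomNum k k k := by
  obtain ⟨S, hS, hcard⟩ := exists_isKkkDomSet_card_eq_kkkDomNum (isKkkDomSet_univ hδ k k)
  have hcount : k * #S + 3 * k * #Sᶜ ≤ 2 * #G.edgeFinset := by
    linarith [hS.mul_card_add_mul_card_compl_le]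
  have hcountℝ : (k * #S + 3 * k * #Sᶜ : ℝ) ≤ 2 * #G.edgeFinset := by exact_mod_cast hcount
  have hsplit : (#S + #Sᶜ : ℝ) = Fintype.card V := by exact_mod_cast card_add_card_compl S
  have hkpos : (0 : ℝ) < k := by exact_mod_cast hk
  have hedges : (3 * Fintype.card V - 2 * #S : ℝ) / 2 ≤ #G.edgeFinset / k := by
    rw [le_div_iff₀ hkpos, ← hsplit]
    linarith
  rw [← hcard]
  linarith
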